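/- arXiv:1804.05001 — 10 statements merged into one kernel-verified Lean document; each statement's English description precedes it below -/
import Mathlib

section
/- Let Q be an n×n real matrix with nonnegative entries such that Q^k·𝟙 → 0 componentwise as k → ∞, where 𝟙 denotes the all-ones vector in ℝ^n. Then for every vector b ∈ ℝ^n the series Σ_{i=0}^{∞} Q^i b converges (componentwise, absolutely), and its sum x* is the unique vector in ℝ^n satisfying x* = Q·x* + b. -/
open Filter Matrix

private lemma summable_half_pow_div {K : ℕ} (hK : 1 ≤ K) :
    Summable (fun i : ℕ => ((1:ℝ)/2) ^ (i / K)) := by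
  set ρ : ℝ := ((1:ℝ)/2) ^ ((1:ℝ)/K) with hρdef
  have hKpos : (0:ℝ) < K := by exact_mod_cast hK
  have hρ0 : (0:ℝ) ≤ ρ := Real.rpow_nonneg (by norm_num) _
  have hρ1 : ρ < 1 := Real.rpow_lt_one (by norm_num) (by norm_num) (by positivity)
  refine Summable.of_nonneg_of_le (fun i => by positivity) (fun i => ?_)
    ((summable_geometric_of_lt_one hρ0 hρ1).mul_left 2)
  have h2 : ρ ^ i = ((1:ℝ)/2) ^ ((i:ℝ)/K) := by
    rw [hρdef, ← Real.rpow_natCast (((1:ℝ)/2) ^ ((1:ℝ)/K)) i,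
      ← Real.rpow_mul (by norm_num)]
    ring_nf
  have hle : (i:ℝ)/K - 1 ≤ ((i / K : ℕ) : ℝ) := by
    have h1 := Nat.div_add_mod i K
    have h2 : i % K < K := Nat.mod_lt _ (by omega)
    have : (i:ℝ) ≤ K * ((i / K : ℕ) : ℝ) + K := by
      have : (K * (i/K) + i % K : ℕ) = i := h1
      have := congrArg (Nat.cast (R := ℝ)) this
      push_cast at this
      nlinarith [this, (by exact_mod_cast h2.le : ((i % K : ℕ) : ℝ) ≤ (K:ℝ))]
    rw [sub_le_iff_le_add, div_le_iff₀ hKpos]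
    nlinarith
  calc ((1:ℝ)/2) ^ (i / K) = ((1:ℝ)/2) ^ (((i / K : ℕ)) : ℝ) :=
        (Real.rpow_natCast _ _).symm
    _ ≤ ((1:ℝ)/2) ^ ((i:ℝ)/K - 1) :=
        Real.rpow_le_rpow_of_exponent_ge (by norm_num) (by norm_num) hle
    _ = ((1:ℝ)/2) ^ ((i:ℝ)/K) / ((1:ℝ)/2) ^ (1:ℝ) := Real.rpow_sub (by norm_num) _ _
    _ = 2 * ρ ^ i := by rw [h2, Real.rpow_one]; ring

/-- If the nonnegative matrix `Q` satisfies `Q^k·𝟙 → 0` componentwise,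
then for every `b` the series `Σ Q^i b` converges componentwise absolutely, and its
sum is the unique vector `x` with `x = Q·x + b`. -/
theorem sound_vi_unique_fixed_point (n : ℕ) (hn : 1 ≤ n)
    (Q : Matrix (Fin n) (Fin n) ℝ)
    (hQ : ∀ s s', 0 ≤ Q s s')
    (hcontr : ∀ s : Fin n,
      Tendsto (fun k : ℕ => ((Q ^ k).mulVec (fun _ => (1 : ℝ))) s) atTop (nhds 0)) :
    ∀ b : Fin n → ℝ,
      (∀ s : Fin n, Summable fun i : ℕ => |((Q ^ i).mulVec b) s|) ∧
      (∀ x : Fin n → ℝ, x = Q.mulVec x + b ↔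
        x = fun s => ∑' i : ℕ, ((Q ^ i).mulVec b) s) := by
  -- entries of powers are nonnegative
  have hpow : ∀ (k : ℕ) (s s' : Fin n), 0 ≤ (Q ^ k) s s' := by
    intro k
    induction k with
    | zero =>
      intro s s'
      by_cases h : s = s' <;> simp [Matrix.one_apply, h]
    | succ k ih =>
      intro s s'
      rw [pow_succ, Matrix.mul_apply]
      exact Finset.sum_nonneg fun j _ => mul_nonneg (ih s j) (hQ j s')
  -- monotonicity of mulVec for nonneg matrices
  have hmono : ∀ (k : ℕ) (u v : Fin n → ℝ), (∀ j, u j ≤ v j) →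
      ∀ s, ((Q ^ k).mulVec u) s ≤ ((Q ^ k).mulVec v) s := by
    intro k u v huv s
    simp only [Matrix.mulVec, dotProduct]
    exact Finset.sum_le_sum fun j _ => mul_le_mul_of_nonneg_left (huv j) (hpow k s j)
  -- mulVec of a constant vector
  have hconst : ∀ (k : ℕ) (c : ℝ) (s : Fin n),
      ((Q ^ k).mulVec (fun _ => c)) s = c * ((Q ^ k).mulVec (fun _ => (1:ℝ))) s := by
    intro k c s
    simp only [Matrix.mulVec, dotProduct, Finset.mul_sum]
    exact Finset.sum_congr rfl fun j _ => by ring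
  have hone : ∀ (k : ℕ) (s : Fin n), 0 ≤ ((Q ^ k).mulVec (fun _ => (1:ℝ))) s := by
    intro k s
    simp only [Matrix.mulVec, dotProduct]
    exact Finset.sum_nonneg fun j _ => by simpa using hpow k s j
  -- choose K with (Q^K)𝟙 ≤ 1/2 componentwise
  obtain ⟨K, hK1, hKhalf⟩ : ∃ K : ℕ, 1 ≤ K ∧
      ∀ s, ((Q ^ K).mulVec (fun _ => (1:ℝ))) s ≤ 1/2 := by
    have h : ∀ᶠ k in atTop, ∀ s : Fin n,
        ((Q ^ k).mulVec (fun _ => (1:ℝ))) s < 1/2 :=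
      Filter.eventually_all.2 fun s =>
        (hcontr s).eventually_lt_const (by norm_num)
    obtain ⟨k₀, hk₀⟩ := Filter.eventually_atTop.1 h
    exact ⟨max k₀ 1, le_max_right _ _,
      fun s => (hk₀ _ (le_max_left _ _) s).le⟩
  -- geometric decay along blocks of length K
  have hblock : ∀ (m : ℕ) (s : Fin n),
      ((Q ^ (K * m)).mulVec (fun _ => (1:ℝ))) s ≤ ((1:ℝ)/2) ^ m := by
    intro m
    induction m with
    | zero => intro s; simp [Matrix.one_mulVec]
    | succ m ih =>
      intro s
      have hsplit : Q ^ (K * (m+1)) = Q ^ (K * m) * Q ^ K := by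
        rw [← pow_add]; ring_nf
      rw [hsplit, ← Matrix.mulVec_mulVec]
      calc ((Q ^ (K*m)).mulVec ((Q ^ K).mulVec fun _ => (1:ℝ))) s
          ≤ ((Q ^ (K*m)).mulVec (fun _ => (1:ℝ)/2)) s :=
            hmono _ _ _ (fun j => hKhalf j) s
        _ = (1/2) * ((Q ^ (K*m)).mulVec (fun _ => (1:ℝ))) s := hconst _ _ _
        _ ≤ (1/2) * ((1:ℝ)/2) ^ m := by
            have := ih s; nlinarith [hone (K*m) s]
        _ = ((1:ℝ)/2) ^ (m+1) := by ring
  -- uniform bound on the first K powers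
  set C : ℝ := ∑ r ∈ Finset.range K, ∑ s : Fin n, ((Q ^ r).mulVec (fun _ => (1:ℝ))) s
    with hCdef
  have hC0 : 0 ≤ C :=
    Finset.sum_nonneg fun r _ => Finset.sum_nonneg fun s _ => hone r s
  have hCr : ∀ r < K, ∀ s, ((Q ^ r).mulVec (fun _ => (1:ℝ))) s ≤ C := by
    intro r hr s
    calc ((Q ^ r).mulVec (fun _ => (1:ℝ))) s
        ≤ ∑ s' : Fin n, ((Q ^ r).mulVec (fun _ => (1:ℝ))) s' :=
          Finset.single_le_sum (fun s' _ => hone r s') (Finset.mem_univ s)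
      _ ≤ C := Finset.single_le_sum
          (f := fun r => ∑ s' : Fin n, ((Q ^ r).mulVec (fun _ => (1:ℝ))) s')
          (fun r' _ => Finset.sum_nonneg fun s' _ => hone r' s')
          (Finset.mem_range.2 hr)
  -- full geometric bound
  have hgeo : ∀ (i : ℕ) (s : Fin n),
      ((Q ^ i).mulVec (fun _ => (1:ℝ))) s ≤ C * ((1:ℝ)/2) ^ (i / K) := by
    intro i s
    have hsplit : Q ^ i = Q ^ (K * (i / K)) * Q ^ (i % K) := by
      rw [← pow_add, Nat.div_add_mod]
    rw [hsplit, ← Matrix.mulVec_mulVec]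
    calc ((Q ^ (K * (i/K))).mulVec ((Q ^ (i % K)).mulVec fun _ => (1:ℝ))) s
        ≤ ((Q ^ (K * (i/K))).mulVec (fun _ => C)) s :=
          hmono _ _ _ (fun j => hCr _ (Nat.mod_lt _ (by omega)) j) s
      _ = C * ((Q ^ (K * (i/K))).mulVec (fun _ => (1:ℝ))) s := hconst _ _ _
      _ ≤ C * ((1:ℝ)/2) ^ (i / K) :=
          mul_le_mul_of_nonneg_left (hblock _ s) hC0
  -- |Q^i v| ≤ (∑|v|) · Q^i 𝟙 pointwise
  have habs : ∀ (v : Fin n → ℝ) (i : ℕ) (s : Fin n),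
      |((Q ^ i).mulVec v) s| ≤ (∑ j, |v j|) * ((Q ^ i).mulVec (fun _ => (1:ℝ))) s := by
    intro v i s
    have hMv : ∀ j, |v j| ≤ ∑ j', |v j'| :=
      fun j => Finset.single_le_sum (f := fun j' => |v j'|)
        (fun j' _ => abs_nonneg _) (Finset.mem_univ j)
    simp only [Matrix.mulVec, dotProduct]
    calc |∑ j, (Q ^ i) s j * v j| ≤ ∑ j, |(Q ^ i) s j * v j| :=
          Finset.abs_sum_le_sum_abs _ _
      _ ≤ ∑ j, (Q ^ i) s j * (∑ j', |v j'|) := by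
          refine Finset.sum_le_sum fun j _ => ?_
          rw [abs_mul, abs_of_nonneg (hpow i s j)]
          exact mul_le_mul_of_nonneg_left (hMv j) (hpow i s j)
      _ = (∑ j', |v j'|) * ∑ j, (Q ^ i) s j * 1 := by
          rw [Finset.mul_sum]; exact Finset.sum_congr rfl fun j _ => by ring
  -- summability
  have hsumv : ∀ (v : Fin n → ℝ) (s : Fin n),
      Summable fun i : ℕ => |((Q ^ i).mulVec v) s| := by
    intro v s
    refine Summable.of_nonneg_of_le (fun i => abs_nonneg _) (fun i => ?_)
      (((summable_half_pow_div hK1).mul_left C).mul_left (∑ j, |v j|))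
    calc |((Q ^ i).mulVec v) s|
        ≤ (∑ j, |v j|) * ((Q ^ i).mulVec (fun _ => (1:ℝ))) s := habs v i s
      _ ≤ (∑ j, |v j|) * (C * ((1:ℝ)/2) ^ (i / K)) :=
          mul_le_mul_of_nonneg_left (hgeo i s)
            (Finset.sum_nonneg fun j _ => abs_nonneg _)
  intro b
  have hsum : ∀ s, Summable fun i : ℕ => ((Q ^ i).mulVec b) s :=
    fun s => (hsumv b s).of_abs
  -- the fixed-point equation for the sum
  have hfix : (fun s => ∑' i : ℕ, ((Q ^ i).mulVec b) s) =
      Q.mulVec (fun s => ∑' i : ℕ, ((Q ^ i).mulVec b) s) + b := by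
    funext s
    have h1 : Q.mulVec (fun s' => ∑' i : ℕ, ((Q ^ i).mulVec b) s') s
        = ∑' i : ℕ, ((Q ^ (i+1)).mulVec b) s := by
      have : Q.mulVec (fun s' => ∑' i : ℕ, ((Q ^ i).mulVec b) s') s
          = ∑ j, ∑' i : ℕ, Q s j * ((Q ^ i).mulVec b) j := by
        simp only [Matrix.mulVec, dotProduct]
        exact Finset.sum_congr rfl fun j _ => (tsum_mul_left).symm
      rw [this, ← Summable.tsum_finsetSum (fun j _ => (hsum j).mul_left _)]
      refine tsum_congr fun i => ?_
      rw [pow_succ', ← Matrix.mulVec_mulVec]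
      simp only [Matrix.mulVec, dotProduct]
    have h2 : ∑' i : ℕ, ((Q ^ i).mulVec b) s
        = ((Q ^ 0).mulVec b) s + ∑' i : ℕ, ((Q ^ (i+1)).mulVec b) s :=
      Summable.tsum_eq_zero_add (hsum s)
    have h3 : ((Q ^ 0).mulVec b) s = b s := by simp [Matrix.one_mulVec]
    simp only [Pi.add_apply, h1, h2, h3]
    ring
  -- uniqueness
  have huniq : ∀ x y : Fin n → ℝ, x = Q.mulVec x + b → y = Q.mulVec y + b → x = y := by
    intro x y hx hy
    have hd : x - y = Q.mulVec (x - y) := by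
      rw [Matrix.mulVec_sub]
      calc x - y = (Q.mulVec x + b) - (Q.mulVec y + b) := by rw [← hx, ← hy]
        _ = Q.mulVec x - Q.mulVec y := by ring
    have hdk : ∀ k : ℕ, x - y = (Q ^ k).mulVec (x - y) := by
      intro k
      induction k with
      | zero => simp [Matrix.one_mulVec]
      | succ k ih =>
        calc x - y = (Q ^ k).mulVec (x - y) := ih
          _ = (Q ^ k).mulVec (Q.mulVec (x - y)) := by rw [← hd]
          _ = (Q ^ (k+1)).mulVec (x - y) := by
              rw [Matrix.mulVec_mulVec, ← pow_succ]
    funext s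
    have hzero : |(x - y) s| ≤ 0 := by
      refine ge_of_tendsto' ((hcontr s).const_mul (∑ j, |(x - y) j|) |>.congr
        (fun k => rfl) |>.mono_right (le_of_eq (by rw [mul_zero]))) fun k => ?_
      calc |(x - y) s| = |((Q ^ k).mulVec (x - y)) s| := by rw [← hdk k]
        _ ≤ (∑ j, |(x - y) j|) * ((Q ^ k).mulVec (fun _ => (1:ℝ))) s := habs _ k s
    have : (x - y) s = 0 := abs_nonpos_iff.mp hzero
    have := sub_eq_zero.mp (by simpa using this)
    exact this
  exact ⟨fun s => hsumv b s, fun x =>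
    ⟨fun hx => huniq x _ hx hfix, fun hx => by rw [hx]; exact hfix⟩⟩
end

section
/- Let ℓ, u ∈ ℝ be such that ℓ ≤ x*(s) ≤ u for all s. Then for every k ≥ 0 and every state s: x_k(s) + y_k(s)·ℓ ≤ x*(s) ≤ x_k(s) + y_k(s)·u. -/
open Matrix

lemma pow_entry_nonneg {n : ℕ} (Q : Matrix (Fin n) (Fin n) ℝ)
    (hQ : ∀ s s', 0 ≤ Q s s') : ∀ k s s', 0 ≤ (Q ^ k) s s' := by
  intro k
  induction k with
  | zero =>
    intro s s'
    simp only [pow_zero, Matrix.one_apply]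
    split <;> norm_num
  | succ k ih =>
    intro s s'
    rw [pow_succ, Matrix.mul_apply]
    exact Finset.sum_nonneg fun j _ => mul_nonneg (ih s j) (hQ j s')

/-- if `ℓ ≤ x*(s) ≤ u` for all `s`, then for every `k` and state `s`,
`x_k(s) + y_k(s)·ℓ ≤ x*(s) ≤ x_k(s) + y_k(s)·u`. -/
theorem sound_vi_bounds_from_lu (n : ℕ) (hn : 1 ≤ n)
    (Q : Matrix (Fin n) (Fin n) ℝ) (b : Fin n → ℝ)
    (hQ : ∀ s s', 0 ≤ Q s s') (hb : ∀ s, 0 ≤ b s)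
    (hrow : ∀ s, (∑ s', Q s s') + b s ≤ 1)
    (xstar : Fin n → ℝ)
    (hfix : xstar = Q.mulVec xstar + b)
    (hx01 : ∀ s, 0 ≤ xstar s ∧ xstar s ≤ 1)
    (ℓ u : ℝ) (hℓ : ∀ s, ℓ ≤ xstar s) (hu : ∀ s, xstar s ≤ u) :
    ∀ (k : ℕ) (s : Fin n),
      (∑ i ∈ Finset.range k, (Q ^ i).mulVec b) s
          + ((Q ^ k).mulVec (fun _ => (1 : ℝ))) s * ℓ ≤ xstar s ∧
      xstar s ≤ (∑ i ∈ Finset.range k, (Q ^ i).mulVec b) s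
          + ((Q ^ k).mulVec (fun _ => (1 : ℝ))) s * u := by
  have hQx : Q.mulVec xstar = xstar - b := by
    exact eq_sub_of_add_eq hfix.symm
  have key : ∀ k : ℕ,
      xstar = (∑ i ∈ Finset.range k, (Q ^ i).mulVec b) + (Q ^ k).mulVec xstar := by
    intro k
    induction k with
    | zero => simp
    | succ k ih =>
      rw [Finset.sum_range_succ, pow_succ,
        show (Q ^ k * Q).mulVec xstar = (Q ^ k).mulVec (Q.mulVec xstar) from
          (Matrix.mulVec_mulVec _ _ _).symm,
        hQx, Matrix.mulVec_sub]
      conv_lhs => rw [ih]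
      abel
  intro k s
  have hkey := congrFun (key k) s
  have hlow : (Q ^ k).mulVec (fun _ => (1 : ℝ)) s * ℓ ≤ (Q ^ k).mulVec xstar s := by
    simp only [Matrix.mulVec, dotProduct, Finset.sum_mul]
    refine Finset.sum_le_sum fun j _ => ?_
    rw [mul_one]
    exact mul_le_mul_of_nonneg_left (hℓ j) (pow_entry_nonneg Q hQ k s j)
  have hhigh : (Q ^ k).mulVec xstar s ≤ (Q ^ k).mulVec (fun _ => (1 : ℝ)) s * u := by
    simp only [Matrix.mulVec, dotProduct, Finset.sum_mul]
    refine Finset.sum_le_sum fun j _ => ?_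
    rw [mul_one]
    exact mul_le_mul_of_nonneg_left (hu j) (pow_entry_nonneg Q hQ k s j)
  simp only [Pi.add_apply] at hkey
  constructor <;> linarith
end

section
/- Let k ≥ 0 be such that y_k(s) < 1 for all s. Then for every state ŝ: min_{s} x_k(s)/(1 − y_k(s)) ≤ x*(ŝ) ≤ max_{s} x_k(s)/(1 − y_k(s)), where min and max range over all states s ∈ Fin n. -/
open Matrix

/-- if `y_k(s) < 1` for all `s`, then for every state `t`,
`min_s x_k(s)/(1 − y_k(s)) ≤ x*(t) ≤ max_s x_k(s)/(1 − y_k(s))`. -/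
theorem sound_vi_ratio_bounds (n : ℕ) (hn : 1 ≤ n)
    (Q : Matrix (Fin n) (Fin n) ℝ) (b : Fin n → ℝ)
    (hQ : ∀ s s', 0 ≤ Q s s') (hb : ∀ s, 0 ≤ b s)
    (hrow : ∀ s, (∑ s', Q s s') + b s ≤ 1)
    (xstar : Fin n → ℝ)
    (hfix : xstar = Q.mulVec xstar + b)
    (hx01 : ∀ s, 0 ≤ xstar s ∧ xstar s ≤ 1)
    (k : ℕ)
    (hyk : ∀ s, ((Q ^ k).mulVec (fun _ => (1 : ℝ))) s < 1) :
    ∀ t : Fin n,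
      (⨅ s : Fin n, (∑ i ∈ Finset.range k, (Q ^ i).mulVec b) s
          / (1 - ((Q ^ k).mulVec (fun _ => (1 : ℝ))) s)) ≤ xstar t ∧
      xstar t ≤ (⨆ s : Fin n, (∑ i ∈ Finset.range k, (Q ^ i).mulVec b) s
          / (1 - ((Q ^ k).mulVec (fun _ => (1 : ℝ))) s)) := by
  have hNE : Nonempty (Fin n) := ⟨⟨0, hn⟩⟩
  -- nonnegativity of powers
  have hQpow : ∀ i s s', 0 ≤ (Q ^ i) s s' := by
    intro i
    induction i with
    | zero => intro s s'; simp [Matrix.one_apply]; positivity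
    | succ i ih =>
      intro s s'
      rw [pow_succ, Matrix.mul_apply]
      exact Finset.sum_nonneg fun j _ => mul_nonneg (ih s j) (hQ j s')
  -- unfolding the fixpoint
  have hkey : ∀ m : ℕ,
      xstar = (∑ i ∈ Finset.range m, (Q ^ i).mulVec b) + (Q ^ m).mulVec xstar := by
    intro m
    induction m with
    | zero => simp
    | succ m ih =>
      have h1 : (Q ^ m).mulVec xstar = (Q ^ m).mulVec b + (Q ^ (m + 1)).mulVec xstar := by
        conv_lhs => rw [hfix]
        rw [Matrix.mulVec_add, pow_succ, ← Matrix.mulVec_mulVec, add_comm]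
      rw [Finset.sum_range_succ]
      conv_lhs => rw [ih, h1]
      abel
  set xk := (∑ i ∈ Finset.range k, (Q ^ i).mulVec b) with hxk
  set yk := (Q ^ k).mulVec (fun _ => (1 : ℝ)) with hyk'
  have hy : ∀ s, yk s = ∑ s', (Q ^ k) s s' := by
    intro s; simp [hyk', Matrix.mulVec, dotProduct]
  have hypos : ∀ s, 0 < 1 - yk s := fun s => by linarith [hyk s]
  have hdecomp : ∀ t, xstar t = xk t + ∑ s', (Q ^ k) t s' * xstar s' := by
    intro t
    have h := congrFun (hkey k) t
    rw [hxk]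
    simpa [Pi.add_apply, Matrix.mulVec, dotProduct] using h
  set f : Fin n → ℝ := fun s => xk s / (1 - yk s) with hf
  have hbdd : BddBelow (Set.range f) := (Set.finite_range f).bddBelow
  have hbdda : BddAbove (Set.range f) := (Set.finite_range f).bddAbove
  intro t
  constructor
  · -- lower bound
    obtain ⟨t1, ht1⟩ := Finite.exists_min xstar
    have hm : xk t1 ≤ xstar t1 * (1 - yk t1) := by
      have h2 : ∑ s', (Q ^ k) t1 s' * xstar t1 ≤ ∑ s', (Q ^ k) t1 s' * xstar s' :=
        Finset.sum_le_sum fun s' _ =>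
          mul_le_mul_of_nonneg_left (ht1 s') (hQpow k t1 s')
      have h3 := hdecomp t1
      have h4 : ∑ s', (Q ^ k) t1 s' * xstar t1 = yk t1 * xstar t1 := by
        rw [hy, Finset.sum_mul]
      nlinarith
    have : f t1 ≤ xstar t1 := by
      rw [hf]; exact div_le_of_le_mul₀ (by linarith [hypos t1]) ((hx01 t1).1) (by linarith)
    calc (⨅ s, f s) ≤ f t1 := ciInf_le hbdd t1
      _ ≤ xstar t1 := this
      _ ≤ xstar t := ht1 t
  · obtain ⟨t0, ht0⟩ := Finite.exists_max xstar
    have hm : xstar t0 * (1 - yk t0) ≤ xk t0 := by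
      have h2 : ∑ s', (Q ^ k) t0 s' * xstar s' ≤ ∑ s', (Q ^ k) t0 s' * xstar t0 :=
        Finset.sum_le_sum fun s' _ =>
          mul_le_mul_of_nonneg_left (ht0 s') (hQpow k t0 s')
      have h3 := hdecomp t0
      have h4 : ∑ s', (Q ^ k) t0 s' * xstar t0 = yk t0 * xstar t0 := by
        rw [hy, Finset.sum_mul]
      nlinarith
    have : xstar t0 ≤ f t0 := by
      rw [hf, le_div_iff₀ (hypos t0)]; linarith
    calc xstar t ≤ xstar t0 := ht0 t
      _ ≤ f t0 := this
      _ ≤ ⨆ s, f s := le_ciSup hbdda t0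
end

section
/- Let k ≥ 0 be such that y_k(s) < 1 for all s. Then for every state ŝ: x_k(ŝ) + y_k(ŝ)·min_{s} x_k(s)/(1 − y_k(s)) ≤ x*(ŝ) ≤ x_k(ŝ) + y_k(ŝ)·max_{s} x_k(s)/(1 − y_k(s)). (This is the key bound of sound value iteration for Markov chains: Pr(◇^{≤k}G) + Pr(□^{≤k}S?)·min_s Pr_s(◇^{≤k}G)/(1 − Pr_s(□^{≤k}S?)) ≤ Pr(◇G) ≤ Pr(◇^{≤k}G) + Pr(□^{≤k}S?)·max_s Pr_s(◇^{≤k}G)/(1 − Pr_s(□^{≤k}S?)).) -/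
open Matrix

lemma svi_pow_nonneg {n : ℕ} (Q : Matrix (Fin n) (Fin n) ℝ)
    (hQ : ∀ s s', 0 ≤ Q s s') (k : ℕ) : ∀ s s', 0 ≤ (Q ^ k) s s' := by
  induction k with
  | zero =>
    intro s s'
    simp [Matrix.one_apply]
    split <;> norm_num
  | succ k ih =>
    intro s s'
    rw [pow_succ, Matrix.mul_apply]
    exact Finset.sum_nonneg fun j _ => mul_nonneg (ih s j) (hQ j s')

lemma svi_expand {n : ℕ} (Q : Matrix (Fin n) (Fin n) ℝ) (b xstar : Fin n → ℝ)
    (hfix : xstar = Q.mulVec xstar + b) (k : ℕ) :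
    xstar = (∑ i ∈ Finset.range k, (Q ^ i).mulVec b) + (Q ^ k).mulVec xstar := by
  induction k with
  | zero => simp
  | succ k ih =>
    rw [Finset.sum_range_succ]
    nth_rewrite 1 [ih]
    have : (Q ^ k).mulVec xstar = (Q ^ (k + 1)).mulVec xstar + (Q ^ k).mulVec b := by
      nth_rewrite 1 [hfix]
      rw [Matrix.mulVec_add, pow_succ, ← Matrix.mulVec_mulVec]
    rw [this]
    abel

/-- Theorem 1, key bound of sound value iteration for MCs:
if `y_k(s) < 1` for all `s`, then for every state `t`,
`x_k(t) + y_k(t)·min_s x_k(s)/(1 − y_k(s)) ≤ x*(t) ≤ x_k(t) + y_k(t)·max_s x_k(s)/(1 − y_k(s))`. -/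
theorem sound_vi_key_bound (n : ℕ) (hn : 1 ≤ n)
    (Q : Matrix (Fin n) (Fin n) ℝ) (b : Fin n → ℝ)
    (hQ : ∀ s s', 0 ≤ Q s s') (hb : ∀ s, 0 ≤ b s)
    (hrow : ∀ s, (∑ s', Q s s') + b s ≤ 1)
    (xstar : Fin n → ℝ)
    (hfix : xstar = Q.mulVec xstar + b)
    (hx01 : ∀ s, 0 ≤ xstar s ∧ xstar s ≤ 1)
    (k : ℕ)
    (hyk : ∀ s, ((Q ^ k).mulVec (fun _ => (1 : ℝ))) s < 1) :
    ∀ t : Fin n,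
      (∑ i ∈ Finset.range k, (Q ^ i).mulVec b) t
          + ((Q ^ k).mulVec (fun _ => (1 : ℝ))) t *
            (⨅ s : Fin n, (∑ i ∈ Finset.range k, (Q ^ i).mulVec b) s
              / (1 - ((Q ^ k).mulVec (fun _ => (1 : ℝ))) s)) ≤ xstar t ∧
      xstar t ≤ (∑ i ∈ Finset.range k, (Q ^ i).mulVec b) t
          + ((Q ^ k).mulVec (fun _ => (1 : ℝ))) t *
            (⨆ s : Fin n, (∑ i ∈ Finset.range k, (Q ^ i).mulVec b) s
              / (1 - ((Q ^ k).mulVec (fun _ => (1 : ℝ))) s)) := by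
  have hne : Nonempty (Fin n) := ⟨⟨0, hn⟩⟩
  set xk := (∑ i ∈ Finset.range k, (Q ^ i).mulVec b) with hxk
  set yk := ((Q ^ k).mulVec (fun _ => (1 : ℝ))) with hykdef
  set f : Fin n → ℝ := fun s => xk s / (1 - yk s) with hf
  have hQk := svi_pow_nonneg Q hQ k
  have hyk0 : ∀ s, 0 ≤ yk s := by
    intro s
    simp only [hykdef, Matrix.mulVec, dotProduct]
    exact Finset.sum_nonneg fun j _ => by
      simpa using hQk s j
  have hpos : ∀ s, 0 < 1 - yk s := fun s => by linarith [hyk s]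
  -- key expansion
  have hexp : ∀ s, xstar s = xk s + ((Q ^ k).mulVec xstar) s := by
    intro s
    conv_lhs => rw [svi_expand Q b xstar hfix k]
    rfl
  -- bound Q^k xstar between yk * min and yk * max of xstar
  obtain ⟨s0, hs0⟩ := Finite.exists_min xstar
  obtain ⟨s1, hs1⟩ := Finite.exists_max xstar
  have hyk_sum : ∀ s, yk s = ∑ s', (Q ^ k) s s' := by
    intro s
    simp [hykdef, Matrix.mulVec, dotProduct]
  have hlow : ∀ s, yk s * xstar s0 ≤ ((Q ^ k).mulVec xstar) s := by
    intro s
    rw [hyk_sum, Finset.sum_mul]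
    simp only [Matrix.mulVec, dotProduct]
    exact Finset.sum_le_sum fun j _ =>
      mul_le_mul_of_nonneg_left (hs0 j) (hQk s j)
  have hhigh : ∀ s, ((Q ^ k).mulVec xstar) s ≤ yk s * xstar s1 := by
    intro s
    rw [hyk_sum, Finset.sum_mul]
    simp only [Matrix.mulVec, dotProduct]
    exact Finset.sum_le_sum fun j _ =>
      mul_le_mul_of_nonneg_left (hs1 j) (hQk s j)
  -- xstar s0 ≥ f s0 ≥ ⨅ f, xstar s1 ≤ f s1 ≤ ⨆ f
  have hmin : f s0 ≤ xstar s0 := by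
    have h1 : xstar s0 ≥ xk s0 + yk s0 * xstar s0 := by
      have e := hexp s0; have l := hlow s0; linarith
    rw [hf, div_le_iff₀ (hpos s0)]
    nlinarith [hpos s0]
  have hmax : xstar s1 ≤ f s1 := by
    have h1 : xstar s1 ≤ xk s1 + yk s1 * xstar s1 := by
      have e := hexp s1; have l := hhigh s1; linarith
    rw [hf, le_div_iff₀ (hpos s1)]
    nlinarith [hpos s1]
  have hinf : (⨅ s, f s) ≤ xstar s0 :=
    le_trans (ciInf_le (Finite.bddBelow_range f) s0) hmin
  have hsup : xstar s1 ≤ ⨆ s, f s :=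
    le_trans hmax (le_ciSup (Finite.bddAbove_range f) s1)
  intro t
  constructor
  · have := hlow t
    have h2 : yk t * (⨅ s, f s) ≤ yk t * xstar s0 :=
      mul_le_mul_of_nonneg_left hinf (hyk0 t)
    rw [hexp t]
    linarith
  · have := hhigh t
    have h2 : yk t * xstar s1 ≤ yk t * (⨆ s, f s) :=
      mul_le_mul_of_nonneg_left hsup (hyk0 t)
    rw [hexp t]
    linarith
end

section
/- For every v ∈ ℝ and every k ≥ 0, applying k times the affine value-iteration map f(x) := Q·x + b to the constant vector v·𝟙 yields exactly f^k(v·𝟙) = x_k + v·y_k. Consequently, the lower and upper bounds x_k + y_k·ℓ and x_k + y_k·u of sound value iteration coincide with the vectors obtained after k steps of interval iteration started from the constant vectors ℓ·𝟙 and u·𝟙, respectively. -/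
open Matrix

/-- applying `k` times the value-iteration map `f(x) = Q·x + b` to the
constant vector `v·𝟙` yields exactly `x_k + v·y_k`.  In particular, the lower and
upper bounds `x_k + y_k·ℓ` and `x_k + y_k·u` of sound value iteration coincide with
the vectors obtained after `k` steps of interval iteration started from `ℓ·𝟙` and
`u·𝟙`. -/
theorem sound_vi_vs_interval_iteration (n : ℕ) (hn : 1 ≤ n)
    (Q : Matrix (Fin n) (Fin n) ℝ) (b : Fin n → ℝ)
    (hQ : ∀ s s', 0 ≤ Q s s') (hb : ∀ s, 0 ≤ b s)
    (hrow : ∀ s, (∑ s', Q s s') + b s ≤ 1) :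
    ∀ (v : ℝ) (k : ℕ),
      (fun x : Fin n → ℝ => Q.mulVec x + b)^[k] (fun _ => v) =
        fun s => (∑ i ∈ Finset.range k, (Q ^ i).mulVec b) s
          + v * ((Q ^ k).mulVec (fun _ => (1 : ℝ))) s := by
  intro v k
  induction k with
  | zero =>
    funext s
    simp [Matrix.mulVec, dotProduct, Matrix.one_apply, Finset.sum_ite_eq]
  | succ k ih =>
    rw [Function.iterate_succ_apply', ih]
    funext s
    simp only [Pi.add_apply]
    have h1 : (fun s => (∑ i ∈ Finset.range k, (Q ^ i).mulVec b) s
        + v * ((Q ^ k).mulVec (fun _ => (1:ℝ))) s)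
        = (∑ i ∈ Finset.range k, (Q ^ i).mulVec b) + v • ((Q ^ k).mulVec (fun _ => (1:ℝ))) := by
      funext t; simp [smul_eq_mul]
    rw [h1, Matrix.mulVec_add, Matrix.mulVec_smul]
    have h2 : Q.mulVec (∑ i ∈ Finset.range k, (Q ^ i).mulVec b)
        = ∑ i ∈ Finset.range k, (Q ^ (i+1)).mulVec b := by
      rw [show Q.mulVec = (Matrix.mulVecLin Q) from rfl, map_sum]
      congr 1; funext i
      rw [Matrix.mulVecLin_apply, Matrix.mulVec_mulVec, ← pow_succ']
    have h3 : Q.mulVec ((Q ^ k).mulVec (fun _ => (1:ℝ)))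
        = (Q ^ (k+1)).mulVec (fun _ => (1:ℝ)) := by
      rw [pow_succ', Matrix.mulVec_mulVec]
    simp only [Pi.add_apply, Pi.smul_apply, h2, h3, smul_eq_mul]
    rw [Finset.sum_range_succ']
    simp [pow_zero, Matrix.one_mulVec]
    ring
end

section
/- Let k ≥ 0 be such that y_k(s) < 1 for all s. Then for every state ŝ: w_k(ŝ) + y_k(ŝ)·min_{s} w_k(s)/(1 − y_k(s)) ≤ w*(ŝ) ≤ w_k(ŝ) + y_k(ŝ)·max_{s} w_k(s)/(1 − y_k(s)). (This is the key bound of sound value iteration for expected rewards: E(◆^{≤k}G) + Pr(□^{≤k}S?)·min_s E_s(◆^{≤k}G)/(1 − Pr_s(□^{≤k}S?)) ≤ E(◆G) ≤ E(◆^{≤k}G) + Pr(□^{≤k}S?)·max_s E_s(◆^{≤k}G)/(1 − Pr_s(□^{≤k}S?)).) -/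
open Matrix

/-- Theorem 3, key bound of sound value iteration for expected rewards:
if `y_k(s) < 1` for all `s`, then for every state `t`,
`w_k(t) + y_k(t)·min_s w_k(s)/(1 − y_k(s)) ≤ w*(t) ≤ w_k(t) + y_k(t)·max_s w_k(s)/(1 − y_k(s))`. -/
theorem sound_vi_reward_key_bound (n : ℕ) (hn : 1 ≤ n)
    (Q : Matrix (Fin n) (Fin n) ℝ)
    (hQ : ∀ s s', 0 ≤ Q s s')
    (hrow : ∀ s, (∑ s', Q s s') ≤ 1)
    (ρ : Fin n → ℝ)
    (wstar : Fin n → ℝ)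
    (hfix : wstar = Q.mulVec wstar + ρ)
    (k : ℕ)
    (hyk : ∀ s, ((Q ^ k).mulVec (fun _ => (1 : ℝ))) s < 1) :
    ∀ t : Fin n,
      (∑ i ∈ Finset.range k, (Q ^ i).mulVec ρ) t
          + ((Q ^ k).mulVec (fun _ => (1 : ℝ))) t *
            (⨅ s : Fin n, (∑ i ∈ Finset.range k, (Q ^ i).mulVec ρ) s
              / (1 - ((Q ^ k).mulVec (fun _ => (1 : ℝ))) s)) ≤ wstar t ∧
      wstar t ≤ (∑ i ∈ Finset.range k, (Q ^ i).mulVec ρ) t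
          + ((Q ^ k).mulVec (fun _ => (1 : ℝ))) t *
            (⨆ s : Fin n, (∑ i ∈ Finset.range k, (Q ^ i).mulVec ρ) s
              / (1 - ((Q ^ k).mulVec (fun _ => (1 : ℝ))) s)) := by
  haveI : Nonempty (Fin n) := ⟨⟨0, hn⟩⟩
  set w : Fin n → ℝ := (∑ i ∈ Finset.range k, (Q ^ i).mulVec ρ) with hw
  set y : Fin n → ℝ := (Q ^ k).mulVec (fun _ => (1 : ℝ)) with hy
  -- nonnegativity of entries of Q^m
  have hQk : ∀ (m : ℕ) (s s' : Fin n), 0 ≤ (Q ^ m) s s' := by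
    intro m
    induction m with
    | zero =>
      intro s s'
      simp only [pow_zero, Matrix.one_apply]
      split <;> norm_num
    | succ m ih =>
      intro s s'
      rw [pow_succ, Matrix.mul_apply]
      exact Finset.sum_nonneg fun j _ => mul_nonneg (ih s j) (hQ j s')
  have hyrow : ∀ t, y t = ∑ s, (Q ^ k) t s := by
    intro t
    simp [hy, Matrix.mulVec, dotProduct]
  have hy0 : ∀ t, 0 ≤ y t := by
    intro t
    rw [hyrow t]
    exact Finset.sum_nonneg fun s _ => hQk k t s
  have h1y : ∀ s, 0 < 1 - y s := fun s => by linarith [hyk s]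
  -- iteration of the fixed point
  have hQw : Q.mulVec wstar = wstar - ρ := eq_sub_of_add_eq hfix.symm
  have hiter : ∀ j : ℕ,
      wstar = (∑ i ∈ Finset.range j, (Q ^ i).mulVec ρ) + (Q ^ j).mulVec wstar := by
    intro j
    induction j with
    | zero => simp [Matrix.one_mulVec]
    | succ j ih =>
      rw [Finset.sum_range_succ, pow_succ, ← Matrix.mulVec_mulVec, hQw,
        Matrix.mulVec_sub]
      conv_lhs => rw [ih]
      abel
  have hpt : ∀ t, wstar t = w t + ((Q ^ k).mulVec wstar) t := by
    intro t
    have := congrFun (hiter k) t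
    simpa [hw] using this
  -- max point
  obtain ⟨s0, -, hs0⟩ := Finset.exists_max_image Finset.univ wstar Finset.univ_nonempty
  obtain ⟨s1, -, hs1⟩ := Finset.exists_min_image Finset.univ wstar Finset.univ_nonempty
  have hub : ∀ t, ((Q ^ k).mulVec wstar) t ≤ y t * wstar s0 := by
    intro t
    have h1 : ((Q ^ k).mulVec wstar) t = ∑ s, (Q ^ k) t s * wstar s := rfl
    rw [h1, hyrow t, Finset.sum_mul]
    exact Finset.sum_le_sum fun s _ =>
      mul_le_mul_of_nonneg_left (hs0 s (Finset.mem_univ s)) (hQk k t s)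
  have hlb : ∀ t, y t * wstar s1 ≤ ((Q ^ k).mulVec wstar) t := by
    intro t
    have h1 : ((Q ^ k).mulVec wstar) t = ∑ s, (Q ^ k) t s * wstar s := rfl
    rw [h1, hyrow t, Finset.sum_mul]
    exact Finset.sum_le_sum fun s _ =>
      mul_le_mul_of_nonneg_left (hs1 s (Finset.mem_univ s)) (hQk k t s)
  -- bound extremal values of wstar by the ratio
  have hM : wstar s0 ≤ w s0 / (1 - y s0) := by
    rw [le_div_iff₀ (h1y s0)]
    nlinarith [hpt s0, hub s0]
  have hm : w s1 / (1 - y s1) ≤ wstar s1 := by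
    rw [div_le_iff₀ (h1y s1)]
    nlinarith [hpt s1, hlb s1]
  have hMsup : wstar s0 ≤ ⨆ s, w s / (1 - y s) :=
    hM.trans (le_ciSup (f := fun s => w s / (1 - y s)) (Set.Finite.bddAbove (Set.finite_range _)) s0)
  have hminf : (⨅ s, w s / (1 - y s)) ≤ wstar s1 :=
    (ciInf_le (f := fun s => w s / (1 - y s)) (Set.Finite.bddBelow (Set.finite_range _)) s1).trans hm
  intro t
  constructor
  · have h2 : y t * (⨅ s, w s / (1 - y s)) ≤ y t * wstar s1 :=
      mul_le_mul_of_nonneg_left hminf (hy0 t)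
    have := hlb t
    have := hpt t
    linarith
  · have h2 : y t * wstar s0 ≤ y t * (⨆ s, w s / (1 - y s)) :=
      mul_le_mul_of_nonneg_left hMsup (hy0 t)
    have := hub t
    have := hpt t
    linarith
end

section
/- For every k-step scheduler σ such that y^σ(s) < 1 for all s, and every state ŝ: x^σ(ŝ) + y^σ(ŝ)·min_{s} x^σ(s)/(1 − y^σ(s)) ≤ x*(ŝ). (In probabilistic terms: Pr^σ(◇^{≤k}G) + Pr^σ(□^{≤k}S?)·min_s Pr^σ_s(◇^{≤k}G)/(1 − Pr^σ_s(□^{≤k}S?)) ≤ Pr^σ(◇G) ≤ Pr^max(◇G).) -/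
open Matrix

/-- `xSched q bb k π s = Pr^π_s(◇^{≤k} G)`: the probability of reaching the goal set
within `k` steps from `s` under the `k`-step scheduler `π` (head of `π` applied first). -/
def xSched {n : ℕ} {α : Type} (q : Fin n → α → Fin n → ℝ) (bb : Fin n → α → ℝ) :
    (k : ℕ) → (Fin k → Fin n → α) → Fin n → ℝ
  | 0, _, _ => 0
  | k + 1, π, s =>
      bb s (π 0 s) + ∑ s', q s (π 0 s) s' * xSched q bb k (fun i => π i.succ) s'

/-- `ySched q k π s = Pr^π_s(□^{≤k} S?)`: the probability of remaining among the
unknown states throughout the first `k` steps under the `k`-step scheduler `π`. -/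
def ySched {n : ℕ} {α : Type} (q : Fin n → α → Fin n → ℝ) :
    (k : ℕ) → (Fin k → Fin n → α) → Fin n → ℝ
  | 0, _, _ => 1
  | k + 1, π, s => ∑ s', q s (π 0 s) s' * ySched q k (fun i => π i.succ) s'

/-- The Bellman operator `T(x)(s) = max_{a ∈ A s} (b_a(s) + Σ_{s'} q_a(s,s')·x(s'))`. -/
def bellman {n : ℕ} {α : Type} (A : Fin n → Finset α) (hA : ∀ s, (A s).Nonempty)
    (q : Fin n → α → Fin n → ℝ) (bb : Fin n → α → ℝ) (x : Fin n → ℝ) : Fin n → ℝ :=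
  fun s => (A s).sup' (hA s) fun a => bb s a + ∑ s', q s a s' * x s'

lemma xSched_nonneg {n : ℕ} {α : Type} (A : Fin n → Finset α)
    (q : Fin n → α → Fin n → ℝ) (bb : Fin n → α → ℝ)
    (hq : ∀ s a, a ∈ A s → ∀ s', 0 ≤ q s a s')
    (hbb : ∀ s a, a ∈ A s → 0 ≤ bb s a) :
    ∀ (k : ℕ) (π : Fin k → Fin n → α), (∀ i s, π i s ∈ A s) →
      ∀ t, 0 ≤ xSched q bb k π t := by
  intro k
  induction k with
  | zero => intro π hπ t; simp [xSched]
  | succ k ih =>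
    intro π hπ t
    have h0 := hπ 0 t
    have := ih (fun i => π i.succ) (fun i s => hπ i.succ s)
    exact add_nonneg (hbb t _ h0) (Finset.sum_nonneg fun s' _ =>
      mul_nonneg (hq t _ h0 s') (this s'))

lemma ySched_nonneg {n : ℕ} {α : Type} (A : Fin n → Finset α)
    (q : Fin n → α → Fin n → ℝ)
    (hq : ∀ s a, a ∈ A s → ∀ s', 0 ≤ q s a s') :
    ∀ (k : ℕ) (π : Fin k → Fin n → α), (∀ i s, π i s ∈ A s) →
      ∀ t, 0 ≤ ySched q k π t := by
  intro k
  induction k with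
  | zero => intro π hπ t; simp [ySched]
  | succ k ih =>
    intro π hπ t
    have h0 := hπ 0 t
    exact Finset.sum_nonneg fun s' _ =>
      mul_nonneg (hq t _ h0 s') (ih (fun i => π i.succ) (fun i s => hπ i.succ s) s')

lemma key_lemma {n : ℕ} {α : Type} (A : Fin n → Finset α) (hA : ∀ s, (A s).Nonempty)
    (q : Fin n → α → Fin n → ℝ) (bb : Fin n → α → ℝ)
    (hq : ∀ s a, a ∈ A s → ∀ s', 0 ≤ q s a s')
    (xstar : Fin n → ℝ)
    (hfix : bellman A hA q bb xstar = xstar) :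
    ∀ (k : ℕ) (π : Fin k → Fin n → α), (∀ i s, π i s ∈ A s) →
      ∀ c : ℝ, (∀ s, c ≤ xstar s) →
      ∀ t, xSched q bb k π t + c * ySched q k π t ≤ xstar t := by
  intro k
  induction k with
  | zero =>
    intro π hπ c hc t
    simpa [xSched, ySched] using hc t
  | succ k ih =>
    intro π hπ c hc t
    have h0 := hπ 0 t
    have ihs := ih (fun i => π i.succ) (fun i s => hπ i.succ s) c hc
    have step1 : xSched q bb (k+1) π t + c * ySched q k.succ π t =
        bb t (π 0 t) + ∑ s', q t (π 0 t) s' *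
          (xSched q bb k (fun i => π i.succ) s' + c * ySched q k (fun i => π i.succ) s') := by
      simp only [xSched, ySched, Finset.mul_sum, ← Finset.sum_add_distrib]
      rw [add_assoc]
      congr 1
      rw [← Finset.sum_add_distrib]
      exact Finset.sum_congr rfl fun s' _ => by ring
    rw [step1]
    have step2 : bb t (π 0 t) + ∑ s', q t (π 0 t) s' *
          (xSched q bb k (fun i => π i.succ) s' + c * ySched q k (fun i => π i.succ) s') ≤
        bb t (π 0 t) + ∑ s', q t (π 0 t) s' * xstar s' := by
      gcongr with s' _
      · exact hq t _ h0 s'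
      · exact ihs s'
    refine step2.trans ?_
    have := Finset.le_sup' (fun a => bb t a + ∑ s', q t a s' * xstar s') h0
    calc bb t (π 0 t) + ∑ s', q t (π 0 t) s' * xstar s'
        ≤ bellman A hA q bb xstar t := this
      _ = xstar t := by rw [hfix]

/-- for every `k`-step scheduler `σ` with `y^σ(s) < 1` for all `s`,
and every state `t`:
`x^σ(t) + y^σ(t)·min_s x^σ(s)/(1 − y^σ(s)) ≤ x*(t)`. -/
theorem sound_vi_mdp_lower_bound {α : Type} (n : ℕ) (hn : 1 ≤ n)
    (A : Fin n → Finset α) (hA : ∀ s, (A s).Nonempty)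
    (q : Fin n → α → Fin n → ℝ) (bb : Fin n → α → ℝ)
    (hq : ∀ s a, a ∈ A s → ∀ s', 0 ≤ q s a s')
    (hbb : ∀ s a, a ∈ A s → 0 ≤ bb s a)
    (hrow : ∀ s a, a ∈ A s → (∑ s', q s a s') + bb s a ≤ 1)
    (xstar : Fin n → ℝ)
    (hfix : bellman A hA q bb xstar = xstar)
    (hx01 : ∀ s, 0 ≤ xstar s ∧ xstar s ≤ 1)
    (k : ℕ) (π : Fin k → Fin n → α) (hπ : ∀ i s, π i s ∈ A s)
    (hy : ∀ s, ySched q k π s < 1) :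
    ∀ t : Fin n,
      xSched q bb k π t + ySched q k π t *
        (⨅ s : Fin n, xSched q bb k π s / (1 - ySched q k π s)) ≤ xstar t := by
  haveI : Nonempty (Fin n) := ⟨⟨0, hn⟩⟩
  set f : Fin n → ℝ := fun s => xSched q bb k π s / (1 - ySched q k π s) with hf
  obtain ⟨s₀, hs₀⟩ := Finite.exists_min xstar
  set M : ℝ := xstar s₀ with hM
  have hM0 : 0 ≤ M := (hx01 s₀).1
  have hxn : ∀ t, 0 ≤ xSched q bb k π t := xSched_nonneg A q bb hq hbb k π hπ
  have hyn : ∀ t, 0 ≤ ySched q k π t := ySched_nonneg A q hq k π hπ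
  have hkey := key_lemma A hA q bb hq xstar hfix k π hπ M hs₀
  -- f s₀ ≤ M
  have hpos : 0 < 1 - ySched q k π s₀ := by linarith [hy s₀]
  have hfs₀ : f s₀ ≤ M := by
    rw [hf, div_le_iff₀ hpos]
    have := hkey s₀
    rw [← hM] at this
    nlinarith
  have hbdd : BddBelow (Set.range f) := (Set.finite_range f).bddBelow
  have hmM : (⨅ s, f s) ≤ M := le_trans (ciInf_le hbdd s₀) hfs₀
  intro t
  set c : ℝ := max (⨅ s, f s) 0 with hc
  have hc0 : 0 ≤ c := le_max_right _ _
  have hcx : ∀ s, c ≤ xstar s := fun s =>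
    max_le (hmM.trans (hs₀ s)) (hx01 s).1
  have := key_lemma A hA q bb hq xstar hfix k π hπ c hcx t
  have hle : ySched q k π t * (⨅ s, f s) ≤ c * ySched q k π t := by
    rw [mul_comm]
    exact mul_le_mul_of_nonneg_right (le_max_left _ _) (hyn t)
  linarith
end

section
/- Let u ∈ ℝ with x*(s) ≤ u for all s, let k ≥ 0, and let σ be a k-step scheduler such that x^σ(s) + y^σ(s)·u = T^k(u·𝟙)(s) for all s (i.e., σ maximizes x^{σ'}(s) + y^{σ'}(s)·u over all k-step schedulers σ', simultaneously at every state) and y^σ(s) < 1 for all s. Then for every state ŝ: x^σ(ŝ) + y^σ(ŝ)·min_{s} x^σ(s)/(1 − y^σ(s)) ≤ x*(ŝ) ≤ x^σ(ŝ) + y^σ(ŝ)·u. (This is the key bound of sound value iteration for MDPs: Pr^σ(◇^{≤k}G) + Pr^σ(□^{≤k}S?)·min_s Pr^σ_s(◇^{≤k}G)/(1 − Pr^σ_s(□^{≤k}S?)) ≤ Pr^max(◇G) ≤ Pr^σ(◇^{≤k}G) + Pr^σ(□^{≤k}S?)·u.) -/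
open Matrix

lemma key_low {n : ℕ} {α : Type} (A : Fin n → Finset α) (hA : ∀ s, (A s).Nonempty)
    (q : Fin n → α → Fin n → ℝ) (bb : Fin n → α → ℝ)
    (hq : ∀ s a, a ∈ A s → ∀ s', 0 ≤ q s a s')
    (xstar : Fin n → ℝ)
    (hfix : bellman A hA q bb xstar = xstar)
    (c : ℝ) (hc : ∀ s, c ≤ xstar s) :
    ∀ k (π : Fin k → Fin n → α), (∀ i s, π i s ∈ A s) →
      ∀ s, xSched q bb k π s + ySched q k π s * c ≤ xstar s := by
  intro k
  induction k with
  | zero => intro π hπ s; simpa [xSched, ySched] using hc s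
  | succ k ih =>
    intro π hπ s
    have h1 : xSched q bb (k+1) π s + ySched q (k+1) π s * c
        = bb s (π 0 s) + ∑ s', q s (π 0 s) s' *
          (xSched q bb k (fun i => π i.succ) s' + ySched q k (fun i => π i.succ) s' * c) := by
      simp only [xSched, ySched, Finset.sum_mul, mul_add, Finset.sum_add_distrib, mul_assoc]
      ring
    rw [h1]
    have h2 : bb s (π 0 s) + ∑ s', q s (π 0 s) s' *
          (xSched q bb k (fun i => π i.succ) s' + ySched q k (fun i => π i.succ) s' * c)
        ≤ bb s (π 0 s) + ∑ s', q s (π 0 s) s' * xstar s' := by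
      apply add_le_add le_rfl
      apply Finset.sum_le_sum
      intro s' _
      exact mul_le_mul_of_nonneg_left (ih _ (fun i t => hπ i.succ t) s') (hq s _ (hπ 0 s) s')
    refine h2.trans ?_
    have h3 : bb s (π 0 s) + ∑ s', q s (π 0 s) s' * xstar s' ≤ bellman A hA q bb xstar s :=
      Finset.le_sup' (fun a => bb s a + ∑ s', q s a s' * xstar s') (hπ 0 s)
    rw [hfix] at h3
    exact h3

lemma bellman_mono {n : ℕ} {α : Type} (A : Fin n → Finset α) (hA : ∀ s, (A s).Nonempty)
    (q : Fin n → α → Fin n → ℝ) (bb : Fin n → α → ℝ)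
    (hq : ∀ s a, a ∈ A s → ∀ s', 0 ≤ q s a s')
    (x y : Fin n → ℝ) (hxy : ∀ s, x s ≤ y s) :
    ∀ s, bellman A hA q bb x s ≤ bellman A hA q bb y s := by
  intro s
  apply Finset.sup'_le
  intro a ha
  refine le_trans ?_ (Finset.le_sup' _ ha)
  apply add_le_add le_rfl
  exact Finset.sum_le_sum fun s' _ => mul_le_mul_of_nonneg_left (hxy s') (hq s a ha s')

lemma xstar_le_iter {n : ℕ} {α : Type} (A : Fin n → Finset α) (hA : ∀ s, (A s).Nonempty)
    (q : Fin n → α → Fin n → ℝ) (bb : Fin n → α → ℝ)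
    (hq : ∀ s a, a ∈ A s → ∀ s', 0 ≤ q s a s')
    (xstar : Fin n → ℝ)
    (hfix : bellman A hA q bb xstar = xstar)
    (u : ℝ) (hu : ∀ s, xstar s ≤ u) :
    ∀ k s, xstar s ≤ (bellman A hA q bb)^[k] (fun _ => u) s := by
  intro k
  induction k with
  | zero => simpa using hu
  | succ k ih =>
    intro s
    rw [Function.iterate_succ_apply']
    calc xstar s = bellman A hA q bb xstar s := by rw [hfix]
      _ ≤ _ := bellman_mono A hA q bb hq _ _ ih s

/-- Theorem 4, key bound of sound value iteration for MDPs: if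
`x*(s) ≤ u` for all `s` and `σ` maximizes `x^σ(s) + y^σ(s)·u` (i.e. attains
`T^k(u·𝟙)(s)`) simultaneously at every state, with `y^σ(s) < 1` for all `s`, then
`x^σ(t) + y^σ(t)·min_s x^σ(s)/(1 − y^σ(s)) ≤ x*(t) ≤ x^σ(t) + y^σ(t)·u`. -/
theorem sound_vi_mdp_key_bound {α : Type} (n : ℕ) (hn : 1 ≤ n)
    (A : Fin n → Finset α) (hA : ∀ s, (A s).Nonempty)
    (q : Fin n → α → Fin n → ℝ) (bb : Fin n → α → ℝ)
    (hq : ∀ s a, a ∈ A s → ∀ s', 0 ≤ q s a s')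
    (hbb : ∀ s a, a ∈ A s → 0 ≤ bb s a)
    (hrow : ∀ s a, a ∈ A s → (∑ s', q s a s') + bb s a ≤ 1)
    (xstar : Fin n → ℝ)
    (hfix : bellman A hA q bb xstar = xstar)
    (hx01 : ∀ s, 0 ≤ xstar s ∧ xstar s ≤ 1)
    (u : ℝ) (hu : ∀ s, xstar s ≤ u)
    (k : ℕ) (π : Fin k → Fin n → α) (hπ : ∀ i s, π i s ∈ A s)
    (hopt : ∀ s, xSched q bb k π s + ySched q k π s * u =
      (bellman A hA q bb)^[k] (fun _ => u) s)
    (hy : ∀ s, ySched q k π s < 1) :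
    ∀ t : Fin n,
      xSched q bb k π t + ySched q k π t *
        (⨅ s : Fin n, xSched q bb k π s / (1 - ySched q k π s)) ≤ xstar t ∧
      xstar t ≤ xSched q bb k π t + ySched q k π t * u := by
  haveI : Nonempty (Fin n) := ⟨⟨0, hn⟩⟩
  -- min of xstar
  obtain ⟨s₀, hs₀⟩ := Finite.exists_min xstar
  set c := xstar s₀ with hc
  have hlow := key_low A hA q bb hq xstar hfix c hs₀ k π hπ
  -- ratio at s₀ is ≤ c
  have hy0 : 0 < 1 - ySched q k π s₀ := by linarith [hy s₀]
  have hr0 : xSched q bb k π s₀ / (1 - ySched q k π s₀) ≤ c := by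
    rw [div_le_iff₀ hy0]
    have := hlow s₀
    nlinarith
  set w := ⨅ s : Fin n, xSched q bb k π s / (1 - ySched q k π s) with hw
  have hwle : w ≤ c :=
    le_trans (ciInf_le (Set.Finite.bddBelow (Set.finite_range _)) s₀) hr0
  have hwx : ∀ s, w ≤ xstar s := fun s => le_trans hwle (hs₀ s)
  intro t
  constructor
  · exact key_low A hA q bb hq xstar hfix w hwx k π hπ t
  · rw [hopt t]
    exact xstar_le_iter A hA q bb hq xstar hfix u hu k t
end

section
/- Let k ≥ 0 be such that y^σ(s) < 1 for every k-step scheduler σ and every state s. Then for every state ŝ: x*(ŝ) ≤ max over all k-step schedulers σ of [ x^σ(ŝ) + y^σ(ŝ)·max_{s} x^σ(s)/(1 − y^σ(s)) ]. (In the paper's notation: Pr^max(◇G) ≤ max_σ û_k^σ, where û_k^σ = Pr^σ(◇^{≤k}G) + Pr^σ(□^{≤k}S?)·max_s Pr^σ_s(◇^{≤k}G)/(1 − Pr^σ_s(□^{≤k}S?)).) -/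
open Matrix

/-- if `y^σ(s) < 1` for every `k`-step scheduler `σ` and state `s`,
then for every state `t`, `x*(t)` is at most the maximum over all `k`-step
schedulers `σ` of `x^σ(t) + y^σ(t)·max_s x^σ(s)/(1 − y^σ(s))`, i.e. some `k`-step
scheduler `σ` satisfies `x*(t) ≤ û_k^σ(t)`. -/
theorem sound_vi_mdp_upper_bound_exists {α : Type} (n : ℕ) (hn : 1 ≤ n)
    (A : Fin n → Finset α) (hA : ∀ s, (A s).Nonempty)
    (q : Fin n → α → Fin n → ℝ) (bb : Fin n → α → ℝ)
    (hq : ∀ s a, a ∈ A s → ∀ s', 0 ≤ q s a s')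
    (hbb : ∀ s a, a ∈ A s → 0 ≤ bb s a)
    (hrow : ∀ s a, a ∈ A s → (∑ s', q s a s') + bb s a ≤ 1)
    (xstar : Fin n → ℝ)
    (hfix : bellman A hA q bb xstar = xstar)
    (hx01 : ∀ s, 0 ≤ xstar s ∧ xstar s ≤ 1)
    (k : ℕ)
    (hy : ∀ π : Fin k → Fin n → α, (∀ i s, π i s ∈ A s) →
      ∀ s, ySched q k π s < 1) :
    ∀ t : Fin n, ∃ π : Fin k → Fin n → α, (∀ i s, π i s ∈ A s) ∧
      xstar t ≤ xSched q bb k π t + ySched q k π t *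
        (⨆ s : Fin n, xSched q bb k π s / (1 - ySched q k π s)) := by
  intro t
  haveI : Nonempty (Fin n) := ⟨⟨0, hn⟩⟩
  -- choose a greedy action at each state
  obtain ⟨a, ha, hfa⟩ : ∃ a : Fin n → α, (∀ s, a s ∈ A s) ∧
      ∀ s, xstar s = bb s (a s) + ∑ s', q s (a s) s' * xstar s' := by
    choose a ha hfa using fun s => (A s).exists_mem_eq_sup' (hA s)
        (fun b => bb s b + ∑ s', q s b s' * xstar s')
    exact ⟨a, ha, fun s => (congrFun hfix s).symm.trans (hfa s)⟩
  set π : Fin k → Fin n → α := fun _ s => a s with hπ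
  have hmem : ∀ i s, π i s ∈ A s := fun _ s => ha s
  obtain ⟨s0, hs0⟩ := Finite.exists_max xstar
  -- nonnegativity of ySched for the stationary scheduler
  have ynn : ∀ m s, 0 ≤ ySched q m (fun _ s => a s) s := by
    intro m
    induction m with
    | zero => intro s; simp [ySched]
    | succ m ih =>
        intro s
        refine Finset.sum_nonneg fun s' _ =>
          mul_nonneg (hq s (a s) (ha s) s') (ih s')
  -- key inequality
  have key : ∀ m s, xstar s ≤ xSched q bb m (fun _ s => a s) s +
      ySched q m (fun _ s => a s) s * xstar s0 := by
    intro m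
    induction m with
    | zero => intro s; simpa [xSched, ySched] using hs0 s
    | succ m ih =>
        intro s
        rw [hfa s]
        have hsum : ∑ s', q s (a s) s' * xstar s' ≤
            (∑ s', q s (a s) s' * xSched q bb m (fun _ s => a s) s') +
            ∑ s', q s (a s) s' * ySched q m (fun _ s => a s) s' * xstar s0 := by
          rw [← Finset.sum_add_distrib]
          refine Finset.sum_le_sum fun s' _ => ?_
          have h1 := ih s'
          have h2 := hq s (a s) (ha s) s'
          nlinarith
        simp only [xSched, ySched, Finset.sum_mul]
        linarith
  have hylt := hy π hmem
  have hpos : ∀ s, 0 < 1 - ySched q k π s := fun s => by linarith [hylt s]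
  have hM : xstar s0 ≤ xSched q bb k π s0 / (1 - ySched q k π s0) := by
    rw [le_div_iff₀ (hpos s0)]
    have := key k s0
    nlinarith
  have hsup : xSched q bb k π s0 / (1 - ySched q k π s0) ≤
      ⨆ s : Fin n, xSched q bb k π s / (1 - ySched q k π s) :=
    le_ciSup (f := fun s : Fin n => xSched q bb k π s / (1 - ySched q k π s)) (Set.Finite.bddAbove (Set.finite_range _)) s0
  refine ⟨π, hmem, ?_⟩
  calc xstar t ≤ xSched q bb k π t + ySched q k π t * xstar s0 := key k t
    _ ≤ _ := by
        gcongr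
        · exact ynn k t
        · exact hM.trans hsup
end

section
/- Soundness of the decision-value update of the upper bound: let u ∈ ℝ with x*(s) ≤ u for all s, let k ≥ 0, and let σ be a k-step scheduler with y^σ(s) < 1 for all s. Let d ∈ ℝ with d ≤ u be such that for every v ∈ [d, u] and every state s, x^σ(s) + y^σ(s)·v = T^k(v·𝟙)(s) (i.e., σ remains a maximizing k-step scheduler for every value v between the decision value d and u). Then for every state s: x*(s) ≤ min( u, max( d, max_{t} x^σ(t)/(1 − y^σ(t)) ) ). (This is the correctness of the updated upper bound u_k in the sound value iteration algorithm for MDPs.) -/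
open Matrix

/-- soundness of the decision-value update: if `x*(s) ≤ u` for all
`s`, `σ` is a `k`-step scheduler with `y^σ(s) < 1` for all `s`, and `σ` remains
maximizing (attains `T^k(v·𝟙)`) for every value `v ∈ [d, u]` where `d ≤ u` is the
decision value, then for every state `s`,
`x*(s) ≤ min(u, max(d, max_t x^σ(t)/(1 − y^σ(t))))`. -/
theorem sound_vi_mdp_decision_value {α : Type} (n : ℕ) (hn : 1 ≤ n)
    (A : Fin n → Finset α) (hA : ∀ s, (A s).Nonempty)
    (q : Fin n → α → Fin n → ℝ) (bb : Fin n → α → ℝ)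
    (hq : ∀ s a, a ∈ A s → ∀ s', 0 ≤ q s a s')
    (hbb : ∀ s a, a ∈ A s → 0 ≤ bb s a)
    (hrow : ∀ s a, a ∈ A s → (∑ s', q s a s') + bb s a ≤ 1)
    (xstar : Fin n → ℝ)
    (hfix : bellman A hA q bb xstar = xstar)
    (hx01 : ∀ s, 0 ≤ xstar s ∧ xstar s ≤ 1)
    (u : ℝ) (hu : ∀ s, xstar s ≤ u)
    (k : ℕ) (π : Fin k → Fin n → α) (hπ : ∀ i s, π i s ∈ A s)
    (hy : ∀ s, ySched q k π s < 1)
    (d : ℝ) (hdu : d ≤ u)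
    (hd : ∀ v ∈ Set.Icc d u, ∀ s, xSched q bb k π s + ySched q k π s * v =
      (bellman A hA q bb)^[k] (fun _ => v) s) :
    ∀ s : Fin n,
      xstar s ≤ min u (max d
        (⨆ t : Fin n, xSched q bb k π t / (1 - ySched q k π t))) := by
  have hne : Nonempty (Fin n) := ⟨⟨0, hn⟩⟩
  have mono : ∀ (x y : Fin n → ℝ), (∀ t, x t ≤ y t) →
      ∀ t, bellman A hA q bb x t ≤ bellman A hA q bb y t := by
    intro x y hxy t
    apply Finset.sup'_le
    intro a ha
    refine le_trans ?_ (Finset.le_sup' _ ha)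
    refine add_le_add le_rfl (Finset.sum_le_sum fun s' _ => ?_)
    exact mul_le_mul_of_nonneg_left (hxy s') (hq t a ha s')
  have monoK : ∀ m (x y : Fin n → ℝ), (∀ t, x t ≤ y t) →
      ∀ t, (bellman A hA q bb)^[m] x t ≤ (bellman A hA q bb)^[m] y t := by
    intro m
    induction m with
    | zero => intro x y hxy t; exact hxy t
    | succ m ih =>
        intro x y hxy t
        rw [Function.iterate_succ_apply', Function.iterate_succ_apply']
        exact mono _ _ (ih x y hxy) t
  intro s
  obtain ⟨s0, hs0⟩ := Finite.exists_max xstar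
  set c := xstar s0 with hc
  set M := ⨆ t : Fin n, xSched q bb k π t / (1 - ySched q k π t) with hM
  rcases le_or_gt c (max d M) with h | h
  · exact le_min (hu s) ((hs0 s).trans h)
  · exfalso
    have hcu : c ≤ u := hu s0
    have hcd : d ≤ c := (le_max_left _ _).trans h.le
    have hstep : xstar s0 ≤ xSched q bb k π s0 + ySched q k π s0 * c := by
      have h1 := monoK k xstar (fun _ => c) hs0 s0
      rw [Function.iterate_fixed hfix k] at h1
      rw [hd c ⟨hcd, hcu⟩ s0]
      exact h1
    have hy0 : ySched q k π s0 < 1 := hy s0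
    have h2 : c ≤ xSched q bb k π s0 / (1 - ySched q k π s0) := by
      rw [le_div_iff₀ (by linarith)]
      nlinarith [hstep]
    have h3 : xSched q bb k π s0 / (1 - ySched q k π s0) ≤ M := by
      rw [hM]
      exact le_ciSup (f := fun t : Fin n => xSched q bb k π t / (1 - ySched q k π t)) (Set.Finite.bddAbove (Set.finite_range _)) s0
    have : M < c := lt_of_le_of_lt (le_max_right d M) h
    linarith
end
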